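/- Let k ∈ ℕ and let B be the 3k×2k real matrix consisting of 2·I_{2k} stacked on top of −2·(I_k ⊗ [1 1]). Let A₁, A₂ be 3k×2k matrices with A₁, A₂ ≥ 0 entrywise, satisfying the partner property A₂(i, 2j−1) = A₂(i, 2j) for all i ∈ [3k], j ∈ [k], and such that every row of A₁ + A₂/2 sums to at most 1. Then the matrix B + A₁ − A₂ has rank 2k (its columns are linearly independent). -/

import Mathlib

/-- The matrix `B` of the direct-union lower bound: `2·I_{2k}` stacked on top of
`−2·(I_k ⊗ [1 1])`. -/
def Bmat (k : ℕ) : Matrix (Fin (3 * k)) (Fin (2 * k)) ℝ :=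
  Matrix.of fun i j =>
    if (i : ℕ) < 2 * k then (if (j : ℕ) = (i : ℕ) then 2 else 0)
    else (if (j : ℕ) / 2 = (i : ℕ) - 2 * k then -2 else 0)

/-!
Let `x` lie in the kernel, write `pairSum k x` for the vector `j ↦ x j + x j'` summing `x` over
the pair `{j, j'}` containing `j`, and let `c = max ‖x‖ ‖pairSum k x‖` in the sup norm. The partner
property gives `A₂ x = A₂ (pairSum k x) / 2`, so the row bound on `A₁ + A₂/2` makes every entry of
`(A₁ - A₂) x` at most `c` in absolute value. The rows of `B` read off `2 x j` and
`-2 (pairSum k x) j`, and `B x = -(A₁ - A₂) x`, whence `2c ≤ c` and `x = 0`.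
-/

open Matrix

def pairSwap (k : ℕ) (j : Fin (2 * k)) : Fin (2 * k) :=
  ⟨if (j : ℕ) % 2 = 0 then (j : ℕ) + 1 else (j : ℕ) - 1, by have := j.isLt; split <;> omega⟩

lemma pairSwap_involutive (k : ℕ) : Function.Involutive (pairSwap k) := by
  intro j
  ext
  simp only [pairSwap]
  split <;> split <;> omega

lemma pairSwap_div_two (k : ℕ) (j : Fin (2 * k)) : (pairSwap k j : ℕ) / 2 = (j : ℕ) / 2 := by
  simp only [pairSwap]
  split <;> omega

lemma pairSwap_ne (k : ℕ) (j : Fin (2 * k)) : j ≠ pairSwap k j := by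
  rw [ne_eq, Fin.ext_iff]
  simp only [pairSwap]
  split <;> omega

lemma filter_div_two_eq_pair (k : ℕ) (j : Fin (2 * k)) :
    Finset.univ.filter (fun j' : Fin (2 * k) => (j' : ℕ) / 2 = (j : ℕ) / 2) =
      {j, pairSwap k j} := by
  ext j'
  simp only [Finset.mem_filter, Finset.mem_univ, true_and, Finset.mem_insert,
    Finset.mem_singleton, Fin.ext_iff, pairSwap]
  split <;> omega

def pairSum {R : Type*} [Add R] (k : ℕ) (x : Fin (2 * k) → R) : Fin (2 * k) → R :=
  fun j => x j + x (pairSwap k j)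

lemma mulVec_pairSum {m R : Type*} [CommSemiring R] {k : ℕ} (A : Matrix m (Fin (2 * k)) R)
    (hA : ∀ i, ∀ j j' : Fin (2 * k), (j : ℕ) / 2 = (j' : ℕ) / 2 → A i j = A i j')
    (x : Fin (2 * k) → R) :
    A *ᵥ pairSum k x = 2 • A *ᵥ x := by
  have hswap : A *ᵥ (x ∘ pairSwap k) = A *ᵥ x := by
    ext i
    refine Fintype.sum_bijective _ (pairSwap_involutive k).bijective _ _ fun j => ?_
    simp only [Function.comp_apply, hA i (pairSwap k j) j (pairSwap_div_two k j)]
  rw [show pairSum k x = x + x ∘ pairSwap k from rfl, mulVec_add, hswap, two_nsmul]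

lemma norm_sub_mulVec_le_max {m n : Type*} [Fintype m] [Fintype n] (A₁ A₂ : Matrix m n ℝ)
    (h1 : ∀ i j, 0 ≤ A₁ i j) (h2 : ∀ i j, 0 ≤ A₂ i j)
    (hrow : ∀ i, ∑ j, (A₁ i j + A₂ i j / 2) ≤ 1) (x y : n → ℝ) (hy : A₂ *ᵥ y = 2 • A₂ *ᵥ x) :
    ‖(A₁ - A₂) *ᵥ x‖ ≤ max ‖x‖ ‖y‖ := by
  have hx2 : A₂ *ᵥ x = (2 : ℝ)⁻¹ • A₂ *ᵥ y := by
    rw [hy, two_nsmul, ← two_smul ℝ, smul_smul, inv_mul_cancel₀ two_ne_zero, one_smul]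
  rw [sub_mulVec, hx2]
  set c := max ‖x‖ ‖y‖
  have hc : 0 ≤ c := (norm_nonneg x).trans (le_max_left _ _)
  have hxc : ∀ j, |x j| ≤ c := fun j => (norm_le_pi_norm x j).trans (le_max_left _ _)
  have hyc : ∀ j, |y j| ≤ c := fun j => (norm_le_pi_norm y j).trans (le_max_right _ _)
  refine (pi_norm_le_iff_of_nonneg hc).2 fun i => ?_
  calc ‖(A₁ *ᵥ x - (2 : ℝ)⁻¹ • A₂ *ᵥ y) i‖ = |∑ j, (A₁ i j * x j - A₂ i j / 2 * y j)| := by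
        simp [mulVec, dotProduct, Finset.sum_sub_distrib, Finset.mul_sum, div_eq_inv_mul, mul_assoc]
    _ ≤ ∑ j, (A₁ i j + A₂ i j / 2) * c := by
        refine (Finset.abs_sum_le_sum_abs _ _).trans (Finset.sum_le_sum fun j _ => ?_)
        have := h1 i j; have := h2 i j
        calc |A₁ i j * x j - A₂ i j / 2 * y j| ≤ A₁ i j * |x j| + A₂ i j / 2 * |y j| := by
              refine (abs_sub _ _).trans_eq ?_
              have : 0 ≤ A₂ i j / 2 := by positivity
              rw [abs_mul, abs_mul, abs_of_nonneg (h1 i j), abs_of_nonneg this]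
          _ ≤ _ := by nlinarith [hxc j, hyc j]
    _ = (∑ j, (A₁ i j + A₂ i j / 2)) * c := (Finset.sum_mul ..).symm
    _ ≤ c := mul_le_of_le_one_left hc (hrow i)

lemma Bmat_mulVec_top (k : ℕ) (x : Fin (2 * k) → ℝ) (j : Fin (2 * k)) :
    (Bmat k *ᵥ x) (Fin.castLE (by omega) j) = 2 * x j := by
  simp only [mulVec, dotProduct, Bmat, of_apply, Fin.val_castLE, j.isLt, if_true]
  simp [Fin.val_inj]

lemma Bmat_mulVec_bottom (k : ℕ) (x : Fin (2 * k) → ℝ) (j : Fin (2 * k)) :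
    (Bmat k *ᵥ x) ⟨2 * k + j / 2, by omega⟩ = -2 * pairSum k x j := by
  have hnot : ¬ 2 * k + (j : ℕ) / 2 < 2 * k := by omega
  simp only [mulVec, dotProduct, Bmat, of_apply, hnot, if_false, add_tsub_cancel_left,
    ite_mul, zero_mul]
  rw [← Finset.sum_filter, filter_div_two_eq_pair, Finset.sum_pair (pairSwap_ne k j), pairSum]
  ring

lemma two_mul_max_norm_le_norm_Bmat_mulVec (k : ℕ) (x : Fin (2 * k) → ℝ) :
    2 * max ‖x‖ ‖pairSum k x‖ ≤ ‖Bmat k *ᵥ x‖ := by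
  have hB := norm_nonneg (Bmat k *ᵥ x)
  rw [← le_div_iff₀' two_pos, max_le_iff, pi_norm_le_iff_of_nonneg (by positivity),
    pi_norm_le_iff_of_nonneg (by positivity)]
  constructor
  · intro j
    have := norm_le_pi_norm (Bmat k *ᵥ x) (Fin.castLE (by omega) j)
    rw [Bmat_mulVec_top, norm_mul] at this
    norm_num at this ⊢; linarith
  · intro j
    have := norm_le_pi_norm (Bmat k *ᵥ x) ⟨2 * k + j / 2, by omega⟩
    rw [Bmat_mulVec_bottom, norm_mul] at this
    norm_num at this ⊢; linarith

lemma eq_zero_of_Bmat_add_sub_mulVec_eq_zero {k : ℕ}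
    (A₁ A₂ : Matrix (Fin (3 * k)) (Fin (2 * k)) ℝ)
    (h1 : ∀ i j, 0 ≤ A₁ i j) (h2 : ∀ i j, 0 ≤ A₂ i j)
    (hpartner : ∀ i, ∀ j j' : Fin (2 * k), (j : ℕ) / 2 = (j' : ℕ) / 2 → A₂ i j = A₂ i j')
    (hrow : ∀ i, ∑ j, (A₁ i j + A₂ i j / 2) ≤ 1) {x : Fin (2 * k) → ℝ}
    (hx : (Bmat k + A₁ - A₂) *ᵥ x = 0) : x = 0 := by
  have hBx : Bmat k *ᵥ x = -((A₁ - A₂) *ᵥ x) := by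
    rw [sub_eq_add_neg, add_assoc, add_mulVec, ← sub_eq_add_neg] at hx
    exact eq_neg_of_add_eq_zero_left hx
  have hle : 2 * max ‖x‖ ‖pairSum k x‖ ≤ max ‖x‖ ‖pairSum k x‖ :=
    calc _ ≤ ‖Bmat k *ᵥ x‖ := two_mul_max_norm_le_norm_Bmat_mulVec k x
      _ = ‖(A₁ - A₂) *ᵥ x‖ := by rw [hBx, norm_neg]
      _ ≤ _ := norm_sub_mulVec_le_max A₁ A₂ h1 h2 hrow x _ (mulVec_pairSum A₂ hpartner x)
  have : ‖x‖ ≤ 0 := by linarith [le_max_left ‖x‖ ‖pairSum k x‖]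
  exact norm_le_zero_iff.1 this

lemma rank_eq_card_of_mulVec_eq_zero {m n K : Type*} [Fintype n] [Field K] (M : Matrix m n K)
    (h : ∀ x, M *ᵥ x = 0 → x = 0) : M.rank = Fintype.card n := by
  rw [rank, LinearMap.finrank_range_of_inj, Module.finrank_fintype_fun_eq_card]
  exact (injective_iff_map_eq_zero _).2 h

/-- For entrywise nonnegative `A₁, A₂` with the partner property on `A₂` and each row of
`A₁ + A₂/2` summing to at most `1`, the matrix `B + A₁ − A₂` has rank `2k`. -/
theorem stmt15 (k : ℕ) (A₁ A₂ : Matrix (Fin (3 * k)) (Fin (2 * k)) ℝ)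
    (h1 : ∀ i j, 0 ≤ A₁ i j) (h2 : ∀ i j, 0 ≤ A₂ i j)
    (hpartner : ∀ i, ∀ j j' : Fin (2 * k), (j : ℕ) / 2 = (j' : ℕ) / 2 → A₂ i j = A₂ i j')
    (hrow : ∀ i, ∑ j, (A₁ i j + A₂ i j / 2) ≤ 1) :
    (Bmat k + A₁ - A₂).rank = 2 * k := by
  rw [rank_eq_card_of_mulVec_eq_zero _ fun _ hx =>
    eq_zero_of_Bmat_add_sub_mulVec_eq_zero A₁ A₂ h1 h2 hpartner hrow hx, Fintype.card_fin]
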